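/- arXiv:2008.07752 — 5 statements merged into one kernel-verified Lean document; each statement's English description precedes it below -/
import Mathlib

section
/- Let ψ be a fixed real number with -π/2 < ψ < π/2, let ν be a complex number with arg ν ∈ (-ψ - π/2, -ψ + π/2), and let w be a complex number with Re(w) > 0. Then Γ(w)/ν^w = ∫_0^{∞ e^{iψ}} e^{-νt} t^{w-1} dt, where the integral is taken along the ray {r e^{iψ} : r > 0} from 0 to ∞ e^{iψ}. -/
open Complex Set MeasureTheory

/-! For real `z > 0`, scaling `t ↦ t / z` gives `∫₀^∞ t^(w-1) e^(-z t) dt = Γ(w) / z^w`.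
Both sides are holomorphic in `z` on the right half-plane, so the identity theorem extends this
to `0 < Re z`. Parametrising the ray by `t = r e^(iψ)` turns the ray integral into
`e^(iψw) ∫₀^∞ r^(w-1) e^(-ν e^(iψ) r) dr`; the hypothesis on `arg ν` says exactly that
`Re (ν e^(iψ)) > 0`, and since `arg ν + ψ ∈ (-π, π]` the principal power `(ν e^(iψ))^w` splits
as `ν^w e^(iψw)`. For `ν = 0` both sides are the junk value `0`: `0^w = 0`, and `r^(w-1)` is
not integrable on `(0, ∞)`. -/

open Filter Topology

lemma integrableOn_rpow_mul_exp_neg_mul {s b : ℝ} (hs : -1 < s) (hb : 0 < b) :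
    IntegrableOn (fun t : ℝ => t ^ s * Real.exp (-(b * t))) (Ioi 0) := by
  simpa [Real.rpow_one] using integrableOn_rpow_mul_exp_neg_mul_rpow hs zero_lt_one hb

namespace Complex

lemma mul_cpow_of_arg_add_mem_Ioc {a b : ℂ} (ha : a ≠ 0) (hb : b ≠ 0)
    (h : a.arg + b.arg ∈ Ioc (-Real.pi) Real.pi) (s : ℂ) :
    (a * b) ^ s = a ^ s * b ^ s := by
  rw [cpow_def_of_ne_zero (mul_ne_zero ha hb), cpow_def_of_ne_zero ha, cpow_def_of_ne_zero hb,
    log_mul ha hb h, add_mul, exp_add]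

lemma ofReal_mul_cpow {r : ℝ} (hr : 0 < r) {z : ℂ} (hz : z ≠ 0) (s : ℂ) :
    ((r : ℂ) * z) ^ s = (r : ℂ) ^ s * z ^ s :=
  mul_cpow_of_arg_add_mem_Ioc (ofReal_ne_zero.2 hr.ne') hz
    (by rw [arg_ofReal_of_nonneg hr.le, zero_add]; exact ⟨neg_pi_lt_arg z, arg_le_pi z⟩) s

lemma norm_cpow_mul_cexp_neg_mul (w z : ℂ) {t : ℝ} (ht : 0 < t) :
    ‖(t : ℂ) ^ (w - 1) * cexp (-(z * t))‖ = t ^ (w.re - 1) * Real.exp (-(z.re * t)) := by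
  rw [norm_mul, norm_exp, norm_cpow_eq_rpow_re_of_pos ht, sub_re, one_re, neg_re, re_mul_ofReal]

lemma continuousOn_cpow_mul_cexp_neg_mul (w z : ℂ) :
    ContinuousOn (fun t : ℝ => (t : ℂ) ^ (w - 1) * cexp (-(z * t))) (Ioi 0) := by
  refine ContinuousOn.mul ?_ (by fun_prop)
  exact continuous_ofReal.continuousOn.cpow_const fun t ht => ofReal_mem_slitPlane.2 ht

lemma integrableOn_cpow_mul_cexp_neg_mul {w z : ℂ} (hw : 0 < w.re) (hz : 0 < z.re) :
    IntegrableOn (fun t : ℝ => (t : ℂ) ^ (w - 1) * cexp (-(z * t))) (Ioi 0) := by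
  refine (integrableOn_rpow_mul_exp_neg_mul (s := w.re - 1) (by linarith) hz).mono'
    ((continuousOn_cpow_mul_cexp_neg_mul w z).aestronglyMeasurable measurableSet_Ioi) ?_
  filter_upwards [ae_restrict_mem measurableSet_Ioi] with t ht
  exact (norm_cpow_mul_cexp_neg_mul w z ht).le

lemma differentiableOn_integral_cpow_mul_cexp_neg_mul {w : ℂ} (hw : 0 < w.re) :
    DifferentiableOn ℂ
      (fun z : ℂ => ∫ t in Ioi (0 : ℝ), (t : ℂ) ^ (w - 1) * cexp (-(z * t))) {z | 0 < z.re} := by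
  intro z₀ hz₀
  obtain ⟨ε, hε, hεz₀⟩ := exists_between (show 0 < z₀.re from hz₀)
  have hs : {z : ℂ | ε < z.re} ∈ 𝓝 z₀ :=
    (continuous_re.isOpen_preimage _ isOpen_Ioi).mem_nhds hεz₀
  refine (hasDerivAt_integral_of_dominated_loc_of_deriv_le
    (F' := fun z (t : ℝ) => (t : ℂ) ^ (w - 1) * cexp (-(z * t)) * -t)
    (bound := fun t => t ^ w.re * Real.exp (-(ε * t))) hs
    (Eventually.of_forall fun z =>
      (continuousOn_cpow_mul_cexp_neg_mul w z).aestronglyMeasurable measurableSet_Ioi)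
    (integrableOn_cpow_mul_cexp_neg_mul hw hz₀) ?_ ?_
    (integrableOn_rpow_mul_exp_neg_mul (by linarith) hε)
    ?_).2.differentiableAt.differentiableWithinAt
  · exact ((continuousOn_cpow_mul_cexp_neg_mul w z₀).mul (by fun_prop)).aestronglyMeasurable
      measurableSet_Ioi
  · filter_upwards [ae_restrict_mem measurableSet_Ioi] with t (ht : 0 < t)
    intro z (hz : ε < z.re)
    calc ‖(t : ℂ) ^ (w - 1) * cexp (-(z * t)) * -t‖
        = t ^ (w.re - 1) * Real.exp (-(z.re * t)) * t := by
          rw [norm_mul, norm_cpow_mul_cexp_neg_mul w z ht, norm_neg, norm_real,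
            Real.norm_of_nonneg ht.le]
      _ = t ^ w.re * Real.exp (-(z.re * t)) := by
          rw [Real.rpow_sub_one ht.ne']; field_simp
      _ ≤ t ^ w.re * Real.exp (-(ε * t)) := by gcongr
  · refine ae_of_all _ fun t z _ => ?_
    exact ((((hasDerivAt_id z).mul_const (t : ℂ)).neg.cexp).const_mul _).congr_deriv
      (by simp only [Pi.neg_apply, id]; ring)

lemma differentiableOn_Gamma_div_cpow (w : ℂ) :
    DifferentiableOn ℂ (fun z : ℂ => Gamma w / z ^ w) {z | 0 < z.re} := fun _ hz =>
  ((differentiableAt_const _).div (differentiableAt_id.cpow_const (Or.inl hz))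
    (cpow_ne_zero_iff.2 (Or.inl (ne_zero_of_re_pos hz)))).differentiableWithinAt

theorem integral_cpow_mul_cexp_neg_mul_Ioi {w z : ℂ} (hw : 0 < w.re) (hz : 0 < z.re) :
    ∫ t in Ioi (0 : ℝ), (t : ℂ) ^ (w - 1) * cexp (-(z * t)) = Gamma w / z ^ w := by
  have h_real : ∀ r : ℝ, 0 < r →
      ∫ t in Ioi (0 : ℝ), (t : ℂ) ^ (w - 1) * cexp (-(r * t)) = Gamma w / (r : ℂ) ^ w := by
    intro r hr
    rw [integral_cpow_mul_exp_neg_mul_Ioi hw hr, one_div, inv_cpow_ofReal_nonneg hr.le,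
      div_eq_inv_mul, mul_comm]
  have h_ofReal : Tendsto ofReal (𝓝[>] 1) (𝓝[≠] 1) := by
    simpa using continuous_ofReal.continuousWithinAt.tendsto_nhdsWithin
      (x := (1 : ℝ)) (s := Ioi 1) (t := {(1 : ℂ)}ᶜ) fun r hr => by simpa using hr.ne'
  have h_freq : ∃ᶠ z in 𝓝[≠] (1 : ℂ),
      ∫ t in Ioi (0 : ℝ), (t : ℂ) ^ (w - 1) * cexp (-(z * t)) = Gamma w / z ^ w :=
    h_ofReal.frequently (Eventually.frequently (f := 𝓝[>] (1 : ℝ))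
      (eventually_mem_nhdsWithin.mono fun r (hr : 1 < r) => h_real r (by linarith)))
  have h_open : IsOpen {z : ℂ | 0 < z.re} := continuous_re.isOpen_preimage _ isOpen_Ioi
  exact ((differentiableOn_integral_cpow_mul_cexp_neg_mul hw).analyticOnNhd h_open
    ).eqOn_of_preconnected_of_frequently_eq
    ((differentiableOn_Gamma_div_cpow w).analyticOnNhd h_open)
    (convex_halfSpace_re_gt 0).isPreconnected (by simp) h_freq hz

end Complex

/-- Gamma integral along the ray of angle `ψ`: for `-π/2 < ψ < π/2`,
`arg ν ∈ (-ψ - π/2, -ψ + π/2)` and `Re w > 0`,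
`Γ(w)/ν^w = ∫_0^{∞ e^{iψ}} e^{-νt} t^{w-1} dt`. -/
theorem Gamma_div_cpow_eq_integral_ray (ψ : ℝ) (hψ₁ : -(Real.pi / 2) < ψ)
    (hψ₂ : ψ < Real.pi / 2) (ν : ℂ) (hν₁ : -ψ - Real.pi / 2 < ν.arg)
    (hν₂ : ν.arg < -ψ + Real.pi / 2) (w : ℂ) (hw : 0 < w.re) :
    Complex.Gamma w / ν ^ w =
      ∫ r in Ioi (0 : ℝ),
        Complex.exp (-ν * (r * Complex.exp (Complex.I * ψ))) *
          (r * Complex.exp (Complex.I * ψ)) ^ (w - 1) * Complex.exp (Complex.I * ψ) := by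
  set b := cexp (I * ψ)
  have hb : b ≠ 0 := exp_ne_zero _
  have hb_arg : b.arg = ψ := by
    rw [show b = cexp (ψ * I) by simp only [b, mul_comm], arg_exp_mul_I, toIocMod_eq_self]
    constructor <;> linarith [Real.pi_pos]
  have h_integrand : ∀ r ∈ Ioi (0 : ℝ), cexp (-ν * (r * b)) * (r * b) ^ (w - 1) * b =
      b ^ w * ((r : ℂ) ^ (w - 1) * cexp (-(ν * b * r))) := by
    intro r hr
    rw [ofReal_mul_cpow hr hb, cpow_sub _ _ hb, cpow_one]
    field_simp
  rw [setIntegral_congr_fun measurableSet_Ioi h_integrand, integral_const_mul]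
  rcases eq_or_ne ν 0 with rfl | hν
  · simp only [zero_mul, neg_zero, exp_zero, mul_one]
    rw [zero_cpow (ne_zero_of_re_pos hw), div_zero, integral_undef (not_integrableOn_Ioi_cpow _),
      mul_zero]
  have h_sum : ν.arg + b.arg ∈ Ioc (-Real.pi) Real.pi := by
    rw [hb_arg]
    constructor <;> linarith
  have h_re : 0 < (ν * b).re := by
    refine (abs_arg_lt_pi_div_two_iff.1 ?_).resolve_right (mul_ne_zero hν hb)
    rw [arg_mul hν hb h_sum, hb_arg, abs_lt]
    constructor <;> linarith
  have hbw : b ^ w ≠ 0 := cpow_ne_zero_iff.2 (Or.inl hb)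
  rw [integral_cpow_mul_cexp_neg_mul_Ioi hw h_re, mul_cpow_of_arg_add_mem_Ioc hν hb h_sum w]
  field_simp
end

section
/- Let c be a nonzero complex number and δ > 0. Suppose f is holomorphic on ℂ \ {0}, f(u) = O(1) as u → 0 along the positive real axis, and f(u) = O(u^{-δ}) as u → ∞ along the positive real axis. Define F₁(z) = ∫_0^∞ f(u)/(u - cz) du for z with Im(cz) < 0. Then for z with cz in the first quadrant (obtained by analytic continuation of F₁ across the positive real axis), F₁(z) = -2πi f(cz) + ∫_0^∞ f(u)/(u - cz) du. -/
/-!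
Put `w = c z`. Around a point of the right half-plane choose a disc `B = B(m, r)` with
`0 < r < m` and split `(0, ∞)` at `(a, b] = (m - r, m + r]`. For `w ∈ B` off the real axis,
`∫₀^∞ f(u)/(u - w) du = ∫_{(0,∞) \ (a,b]} f(u)/(u - w) du + ∫_a^b (f(u) - f(w))/(u - w) du`
`+ f(w) (log (b - w) - log (a - w))`.
The first two terms are holomorphic on all of `B`, and `log (a - w) = log (w - a) ± πi` when
`∓ Im w > 0`. Replacing `log (a - w)` by `log (w - a) + πi` therefore gives a function holomorphic
on `B` that equals `F₁` below the real axis and `F₁ - 2πi f` above it; by the identity theorem it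
agrees with the continuation `G` on `B`.
-/

open Complex Set MeasureTheory Filter Metric Topology

section ParametricIntegral

variable {α E : Type*} [MeasurableSpace α] {μ : Measure α} [NormedAddCommGroup E]

theorem aestronglyMeasurable_deriv_apply {𝕜 : Type*} [NontriviallyNormedField 𝕜]
    [NormedSpace 𝕜 E] {F : 𝕜 → α → E} {z₀ : 𝕜}
    (hF_meas : ∀ᶠ z in 𝓝 z₀, AEStronglyMeasurable (F z) μ)
    (hF_diff : ∀ᵐ a ∂μ, DifferentiableAt 𝕜 (F · a) z₀) :
    AEStronglyMeasurable (fun a => deriv (F · a) z₀) μ := by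
  obtain ⟨s, hs⟩ := exists_seq_tendsto (𝓝[≠] z₀)
  obtain ⟨N, hN⟩ := eventually_atTop.mp ((hs.mono_right nhdsWithin_le_nhds).eventually hF_meas)
  refine aestronglyMeasurable_of_tendsto_ae atTop
    (f := fun n a => slope (F · a) z₀ (s (n + N))) (fun n => ?_) ?_
  · simp only [slope_def_module]
    exact ((hN _ le_add_self).sub hF_meas.self_of_nhds).const_smul _
  · filter_upwards [hF_diff] with a ha
    exact (hasDerivAt_iff_tendsto_slope.mp ha.hasDerivAt).comp
      (hs.comp (tendsto_add_atTop_nat N))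

theorem differentiableOn_integral_of_dominated [NormedSpace ℂ E] {F : ℂ → α → E} {U : Set ℂ}
    {bound : α → ℝ} (hU : IsOpen U) (hF_meas : ∀ z ∈ U, AEStronglyMeasurable (F z) μ)
    (hF_diff : ∀ᵐ a ∂μ, DifferentiableOn ℂ (F · a) U)
    (h_bound : ∀ᵐ a ∂μ, ∀ z ∈ U, ‖F z a‖ ≤ bound a) (bound_integrable : Integrable bound μ) :
    DifferentiableOn ℂ (fun z => ∫ a, F z a ∂μ) U := by
  intro z₀ hz₀
  obtain ⟨ε, hε, hball⟩ := Metric.isOpen_iff.mp hU z₀ hz₀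
  have hρ : 0 < ε / 2 := half_pos hε
  have hsub : ∀ z ∈ ball z₀ (ε / 2), closedBall z (ε / 2) ⊆ U := fun z hz =>
    (closedBall_subset_ball' (by linarith [mem_ball.mp hz])).trans hball
  -- Cauchy's estimate turns the bound on `F` into a bound on its derivative.
  have h_deriv_bound : ∀ᵐ a ∂μ, ∀ z ∈ ball z₀ (ε / 2),
      ‖deriv (F · a) z‖ ≤ bound a / (ε / 2) := by
    filter_upwards [hF_diff, h_bound] with a hda hba z hz
    exact Complex.norm_deriv_le_of_forall_mem_sphere_norm_le hρ
      ((hda.mono (hsub z hz)).diffContOnCl_ball subset_rfl)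
      fun w hw => hba w (hsub z hz (sphere_subset_closedBall hw))
  have h_deriv : ∀ᵐ a ∂μ, ∀ z ∈ ball z₀ (ε / 2), HasDerivAt (F · a) (deriv (F · a) z) z := by
    filter_upwards [hF_diff] with a hda z hz
    exact (hda.differentiableAt (hU.mem_nhds (hsub z hz (mem_closedBall_self hρ.le)))).hasDerivAt
  have hF_int : Integrable (F z₀) μ :=
    bound_integrable.mono' (hF_meas z₀ hz₀) (h_bound.mono fun a ha => ha z₀ hz₀)
  have hF_meas_nhds : ∀ᶠ z in 𝓝 z₀, AEStronglyMeasurable (F z) μ :=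
    eventually_of_mem (hU.mem_nhds hz₀) hF_meas
  have hF'_meas := aestronglyMeasurable_deriv_apply hF_meas_nhds
    (hF_diff.mono fun a ha => ha.differentiableAt (hU.mem_nhds hz₀))
  exact (hasDerivAt_integral_of_dominated_loc_of_deriv_le (ball_mem_nhds z₀ hρ) hF_meas_nhds
    hF_int hF'_meas h_deriv_bound (bound_integrable.div_const _)
    h_deriv).2.differentiableAt.differentiableWithinAt

end ParametricIntegral

noncomputable def cauchyTypeIntegral (g : ℝ → ℂ) (s : Set ℝ) (w : ℂ) : ℂ :=
  ∫ u in s, g u / (u - w)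

section CauchyKernel

variable {g : ℝ → ℂ} {s : Set ℝ}

theorem integrableOn_inv_one_add_abs_smul_Ioi {δ : ℝ} (hδ : 0 < δ)
    (hg : ContinuousOn g (Ioi 0)) (hg0 : ∃ C : ℝ, ∀ u : ℝ, 0 < u → u < 1 → ‖g u‖ ≤ C)
    (hg_inf : ∃ C : ℝ, ∀ u : ℝ, 1 ≤ u → ‖g u‖ ≤ C * u ^ (-δ)) :
    IntegrableOn (fun u => (1 + |u|)⁻¹ • g u) (Ioi 0) := by
  obtain ⟨C₀, hC₀⟩ := hg0
  obtain ⟨C₁, hC₁⟩ := hg_inf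
  have hmeas : ∀ t ⊆ Ioi (0 : ℝ), MeasurableSet t →
      AEStronglyMeasurable (fun u => (1 + |u|)⁻¹ • g u) (volume.restrict t) := fun t ht hmt =>
    (((continuous_const.add continuous_abs).inv₀ fun u =>
      (by positivity : (0 : ℝ) < 1 + |u|).ne').continuousOn.smul (hg.mono ht)).aestronglyMeasurable
      hmt
  rw [← Ioo_union_Ici_eq_Ioi zero_lt_one]
  refine IntegrableOn.union ?_ ?_
  · refine Integrable.mono' (g := fun _ => C₀) (integrableOn_const measure_Ioo_lt_top.ne)
      (hmeas _ Ioo_subset_Ioi_self measurableSet_Ioo) ?_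
    filter_upwards [ae_restrict_mem measurableSet_Ioo] with u hu
    rw [norm_smul, norm_inv, Real.norm_of_nonneg (by positivity)]
    exact (mul_le_of_le_one_left (norm_nonneg _)
      (inv_le_one_of_one_le₀ (by linarith [abs_nonneg u]))).trans (hC₀ u hu.1 hu.2)
  · refine Integrable.mono' (g := fun u => C₁ * u ^ (-δ - 1)) ?_
      (hmeas _ (Ici_subset_Ioi.mpr zero_lt_one) measurableSet_Ici) ?_
    · exact (integrableOn_Ici_iff_integrableOn_Ioi (f := fun u : ℝ => C₁ * u ^ (-δ - 1))).mpr
        ((integrableOn_Ioi_rpow_of_lt (by linarith) zero_lt_one).const_mul C₁)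
    · filter_upwards [ae_restrict_mem measurableSet_Ici] with u (hu : 1 ≤ u)
      have hu0 : 0 < u := zero_lt_one.trans_le hu
      rw [norm_smul, norm_inv, Real.norm_of_nonneg (by positivity), abs_of_pos hu0,
        Real.rpow_sub hu0, Real.rpow_one, mul_div_assoc', div_eq_inv_mul]
      exact mul_le_mul (inv_anti₀ hu0 (by linarith)) (hC₁ u hu) (norm_nonneg _)
        (inv_nonneg.mpr hu0.le)

theorem div_ofReal_sub_eq_mul_smul (z : ℂ) (u : ℝ) (w : ℂ) :
    z / (u - w) = ((1 + |u| : ℝ) : ℂ) / (u - w) * ((1 + |u|)⁻¹ • z) := by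
  have : ((1 + |u| : ℝ) : ℂ) ≠ 0 := ofReal_ne_zero.mpr (by positivity)
  rw [Complex.real_smul, ofReal_inv]
  field_simp

theorem norm_one_add_abs_div_ofReal_sub_le {u : ℝ} {w : ℂ} {ε : ℝ} (hε : 0 < ε)
    (h : ε ≤ ‖(u : ℂ) - w‖) :
    ‖((1 + |u| : ℝ) : ℂ) / (u - w)‖ ≤ 1 + (1 + ‖w‖) / ε := by
  have hpos : 0 < ‖(u : ℂ) - w‖ := hε.trans_le h
  have hu : |u| ≤ ‖(u : ℂ) - w‖ + ‖w‖ := by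
    simpa [Complex.norm_real] using norm_le_norm_sub_add (u : ℂ) w
  rw [norm_div, Complex.norm_real, Real.norm_of_nonneg (by positivity), div_le_iff₀ hpos]
  have : (1 + ‖w‖) ≤ (1 + ‖w‖) / ε * ‖(u : ℂ) - w‖ := by
    rw [div_mul_eq_mul_div, le_div_iff₀ hε]
    exact mul_le_mul_of_nonneg_left h (by positivity)
  linarith

theorem integrableOn_div_ofReal_sub (hg : IntegrableOn (fun u => (1 + |u|)⁻¹ • g u) s)
    {w : ℂ} {ε : ℝ} (hε : 0 < ε) (hw : ∀ u ∈ s, ε ≤ ‖(u : ℂ) - w‖) (hs : MeasurableSet s) :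
    IntegrableOn (fun u => g u / (u - w)) s := by
  have hmul : IntegrableOn
      (fun u => ((1 + |u| : ℝ) : ℂ) / (u - w) * ((1 + |u|)⁻¹ • g u)) s :=
    hg.bdd_mul (c := 1 + (1 + ‖w‖) / ε) (Measurable.aestronglyMeasurable (by fun_prop))
      (ae_restrict_of_forall_mem hs fun u hu => norm_one_add_abs_div_ofReal_sub_le hε (hw u hu))
  simpa only [← div_ofReal_sub_eq_mul_smul] using hmul

theorem integrableOn_div_ofReal_sub_of_im_ne_zero
    (hg : IntegrableOn (fun u => (1 + |u|)⁻¹ • g u) s) (hs : MeasurableSet s) {w : ℂ}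
    (hw : w.im ≠ 0) : IntegrableOn (fun u => g u / (u - w)) s :=
  integrableOn_div_ofReal_sub hg (abs_pos.mpr hw)
    (fun u _ => by simpa using abs_im_le_norm ((u : ℂ) - w)) hs

theorem differentiableOn_cauchyTypeIntegral (hg : IntegrableOn (fun u => (1 + |u|)⁻¹ • g u) s)
    (hs : MeasurableSet s) :
    DifferentiableOn ℂ (cauchyTypeIntegral g s) (closure ((↑) '' s))ᶜ := by
  intro w₁ hw₁
  obtain ⟨ε, hε, hdist⟩ : ∃ ε > 0, ∀ u ∈ s, ∀ w ∈ ball w₁ ε, ε ≤ ‖(u : ℂ) - w‖ := by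
    rw [mem_compl_iff, Metric.mem_closure_iff] at hw₁
    push Not at hw₁
    obtain ⟨ε, hε, hfar⟩ := hw₁
    refine ⟨ε / 2, half_pos hε, fun u hu w hw => ?_⟩
    have := hfar u (mem_image_of_mem _ hu)
    rw [mem_ball] at hw
    rw [← dist_eq_norm]
    linarith [dist_triangle w₁ w u, dist_comm w w₁, dist_comm (u : ℂ) w]
  have hne : ∀ u ∈ s, ∀ w ∈ ball w₁ ε, (u : ℂ) - w ≠ 0 := fun u hu w hw h =>
    by linarith [hdist u hu w hw, norm_zero (E := ℂ) ▸ congrArg norm h]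
  have hdiff : DifferentiableOn ℂ (cauchyTypeIntegral g s) (ball w₁ ε) := by
    refine differentiableOn_integral_of_dominated
      (bound := fun u => (1 + (1 + (‖w₁‖ + ε)) / ε) * ‖(1 + |u|)⁻¹ • g u‖) isOpen_ball
      (fun w hw => (integrableOn_div_ofReal_sub hg hε (fun u hu => hdist u hu w hw) hs).1)
      (ae_restrict_of_forall_mem hs fun u hu => ?_)
      (ae_restrict_of_forall_mem hs fun u hu w hw => ?_) (hg.norm.const_mul _)
    · exact (differentiableOn_const _).div ((differentiableOn_const _).sub differentiableOn_id)
        (hne u hu)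
    · have hw' : ‖w‖ ≤ ‖w₁‖ + ε := by
        linarith [norm_le_norm_add_norm_sub' w w₁, mem_ball_iff_norm.mp hw]
      rw [div_ofReal_sub_eq_mul_smul, norm_mul]
      gcongr
      exact (norm_one_add_abs_div_ofReal_sub_le hε (hdist u hu w hw)).trans (by gcongr)
  exact (hdiff.differentiableAt (ball_mem_nhds w₁ hε)).differentiableWithinAt

end CauchyKernel

section Dslope

variable {E : Type*} [NormedAddCommGroup E] [NormedSpace ℂ E] [CompleteSpace E]

theorem dslope_comm {𝕜 F : Type*} [NontriviallyNormedField 𝕜] [NormedAddCommGroup F]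
    [NormedSpace 𝕜 F] (f : 𝕜 → F) (a b : 𝕜) : dslope f a b = dslope f b a := by
  rcases eq_or_ne a b with rfl | hab
  · rfl
  · rw [dslope_of_ne f hab.symm, dslope_of_ne f hab, slope_comm]

theorem norm_dslope_le {f : ℂ → E} {c : ℂ} {r R M : ℝ} (hrR : r < R)
    (hf : DifferentiableOn ℂ f (closedBall c R)) (hM : ∀ z ∈ sphere c R, ‖f z‖ ≤ M)
    {u w : ℂ} (hu : u ∈ closedBall c r) (hw : w ∈ closedBall c R) :
    ‖dslope f u w‖ ≤ 2 * M / (R - r) := by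
  have huR : u ∈ ball c R := mem_ball.mpr ((mem_closedBall.mp hu).trans_lt hrR)
  have hR : 0 < R := dist_nonneg.trans_lt huR
  have hclosure : closure (ball c R) = closedBall c R := closure_ball c hR.ne'
  have hfu : ‖f u‖ ≤ M :=
    Complex.norm_le_of_forall_mem_frontier_norm_le isBounded_ball
      (hf.diffContOnCl_ball subset_rfl) (by rwa [frontier_ball c hR.ne'])
      (hclosure ▸ ball_subset_closedBall huR)
  refine Complex.norm_le_of_forall_mem_frontier_norm_le isBounded_ball
    (((Complex.differentiableOn_dslope (closedBall_mem_nhds_of_mem huR)).mpr hf).diffContOnCl_ball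
      subset_rfl) (fun z hz => ?_) (hclosure ▸ hw)
  rw [frontier_ball c hR.ne', mem_sphere] at hz
  have hzu : R - r ≤ dist z u := by
    linarith [dist_triangle z u c, mem_closedBall.mp hu]
  have hne : z ≠ u := fun h => by rw [h, dist_self] at hzu; linarith
  rw [dslope_of_ne f hne, slope_def_module, norm_smul, norm_inv, ← dist_eq_norm,
    inv_mul_eq_div]
  exact div_le_div₀ (by linarith [norm_nonneg (f u)])
    ((norm_sub_le _ _).trans (by linarith [hM z (mem_sphere.mpr hz)])) (by linarith) hzu

theorem differentiableOn_integral_dslope {f : ℂ → E} {μ : Measure ℝ} [IsFiniteMeasure μ]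
    {c : ℂ} {r R : ℝ} (hrR : r < R) (hf : DifferentiableOn ℂ f (closedBall c R))
    (hμ : ∀ᵐ u : ℝ ∂μ, (u : ℂ) ∈ closedBall c r) :
    DifferentiableOn ℂ (fun w => ∫ u, dslope f w u ∂μ) (ball c R) := by
  obtain ⟨M, hM⟩ := (isCompact_sphere c R).exists_bound_of_continuousOn
    (hf.continuousOn.mono sphere_subset_closedBall)
  have hdslope : ∀ v ∈ ball c R, DifferentiableOn ℂ (dslope f v) (closedBall c R) := fun v hv =>
    (Complex.differentiableOn_dslope (closedBall_mem_nhds_of_mem hv)).mpr hf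
  have hμR : μ.restrict (ofReal ⁻¹' closedBall c R) = μ :=
    Measure.restrict_eq_self_of_ae_mem <| hμ.mono fun u hu =>
      closedBall_subset_closedBall hrR.le hu
  refine differentiableOn_integral_of_dominated (bound := fun _ => 2 * M / (R - r)) isOpen_ball
    (fun w hw => ?_) ?_ ?_ (integrable_const _)
  · rw [← hμR]
    exact ((hdslope w hw).continuousOn.comp continuous_ofReal.continuousOn (mapsTo_preimage _ _)
      ).aestronglyMeasurable (isClosed_closedBall.preimage continuous_ofReal).measurableSet
  · filter_upwards [hμ] with u hu
    simp_rw [dslope_comm f _ (u : ℂ)]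
    exact (hdslope u (closedBall_subset_ball hrR hu)).mono ball_subset_closedBall
  · filter_upwards [hμ] with u hu w hw
    rw [dslope_comm]
    exact norm_dslope_le hrR hf hM hu (ball_subset_closedBall hw)

end Dslope

theorem ofReal_sub_ne_zero_of_im_ne_zero {w : ℂ} (hw : w.im ≠ 0) (u : ℝ) : (u : ℂ) - w ≠ 0 :=
  fun h => hw (by simpa using congrArg im h)

theorem integral_Ioc_inv_ofReal_sub {w : ℂ} (hw : w.im ≠ 0) {a b : ℝ} (hab : a ≤ b) :
    ∫ u in Ioc a b, ((u : ℂ) - w)⁻¹ = log (b - w) - log (a - w) := by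
  rw [← intervalIntegral.integral_of_le hab]
  refine intervalIntegral.integral_eq_sub_of_hasDerivAt (f := fun x : ℝ => log ((x : ℂ) - w))
    (fun x _ => ?_) ?_
  · have hslit : (x : ℂ) - w ∈ slitPlane := mem_slitPlane_iff.mpr (Or.inr (by simpa using hw))
    exact (((hasDerivAt_id (x : ℂ)).sub_const w).clog hslit).comp_ofReal.congr_deriv (one_div _)
  · exact ((continuous_ofReal.continuousOn.sub continuousOn_const).inv₀
      fun x _ => ofReal_sub_ne_zero_of_im_ne_zero hw x).intervalIntegrable

theorem log_neg_of_im_neg {z : ℂ} (hz : z.im < 0) : log (-z) = log z + Real.pi * I := by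
  apply Complex.ext <;> simp [log_re, log_im, arg_neg_eq_arg_add_pi_of_im_neg hz]

theorem log_neg_of_im_pos {z : ℂ} (hz : 0 < z.im) : log (-z) = log z - Real.pi * I := by
  apply Complex.ext <;> simp [log_re, log_im, arg_neg_eq_arg_sub_pi_of_im_pos hz]

theorem abs_re_sub_lt_of_mem_ball {m r : ℝ} {w : ℂ} (hw : w ∈ ball (m : ℂ) r) :
    |w.re - m| < r := by
  simpa using (abs_re_le_norm (w - m)).trans_lt (mem_ball_iff_norm.mp hw)

theorem exists_mem_ball_ofReal {w : ℂ} (hw : 0 < w.re) :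
    ∃ m r : ℝ, 0 < r ∧ r < m ∧ w ∈ ball (m : ℂ) r := by
  set m := ‖w‖ ^ 2 / w.re
  have hm : m * w.re = w.re ^ 2 + w.im ^ 2 := by
    rw [div_mul_cancel₀ _ hw.ne', ← normSq_eq_norm_sq, normSq_apply]; ring
  have hdist : dist w m < m := by
    have hsq : dist w m ^ 2 < m ^ 2 := by
      rw [dist_eq_norm, ← normSq_eq_norm_sq, normSq_apply]
      simp only [sub_re, sub_im, ofReal_re, ofReal_im, sub_zero]
      nlinarith
    exact lt_of_pow_lt_pow_left₀ 2 (by nlinarith) hsq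
  exact ⟨m, (dist w m + m) / 2, by linarith [dist_nonneg (x := w) (y := m)], by linarith,
    mem_ball.mpr (by linarith)⟩

section Continuation

variable {f : ℂ → ℂ}

theorem cauchyTypeIntegral_Ioc_eq {w : ℂ} (hw : w.im ≠ 0) {a b : ℝ} (hab : a ≤ b)
    (hint : IntegrableOn (fun u : ℝ => f u / (u - w)) (Ioc a b)) :
    cauchyTypeIntegral (fun u => f u) (Ioc a b) w =
      (∫ u in Ioc a b, dslope f w u) + f w * (log (b - w) - log (a - w)) := by
  have hne := ofReal_sub_ne_zero_of_im_ne_zero hw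
  have hdslope : ∀ u : ℝ, dslope f w u = f u / (u - w) - f w * ((u : ℂ) - w)⁻¹ := fun u => by
    rw [dslope_of_ne f (sub_ne_zero.mp (hne u)), slope_def_field]
    field_simp [hne u]
  have hinv : IntegrableOn (fun u : ℝ => ((u : ℂ) - w)⁻¹) (Ioc a b) :=
    ((continuous_ofReal.continuousOn.sub continuousOn_const).inv₀
      fun u _ => hne u).integrableOn_Icc.mono_set Ioc_subset_Icc_self
  simp_rw [hdslope]
  rw [integral_sub hint (hinv.const_mul _), integral_const_mul,
    integral_Ioc_inv_ofReal_sub hw hab, cauchyTypeIntegral]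
  ring

theorem cauchyTypeIntegral_Ioi_eq (hfi : IntegrableOn (fun u : ℝ => (1 + |u|)⁻¹ • f u) (Ioi 0))
    {w : ℂ} (hw : w.im ≠ 0) {a b : ℝ} (ha : 0 ≤ a) (hab : a ≤ b) :
    cauchyTypeIntegral (fun u => f u) (Ioi 0) w =
      cauchyTypeIntegral (fun u => f u) (Ioi 0 \ Ioc a b) w + (∫ u in Ioc a b, dslope f w u)
        + f w * (log (b - w) - log (a - w)) := by
  have hint := integrableOn_div_ofReal_sub_of_im_ne_zero hfi measurableSet_Ioi hw
  have hsub : Ioi 0 ∩ Ioc a b = Ioc a b :=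
    inter_eq_right.mpr fun u hu => ha.trans_lt hu.1
  rw [add_assoc, ← cauchyTypeIntegral_Ioc_eq hw hab (hsub ▸ hint.mono_set inter_subset_left),
    cauchyTypeIntegral, cauchyTypeIntegral, cauchyTypeIntegral,
    ← integral_inter_add_sdiff measurableSet_Ioc hint, hsub, add_comm]

noncomputable def cauchyTypeIntegralContinuation (f : ℂ → ℂ) (a b : ℝ) (w : ℂ) : ℂ :=
  cauchyTypeIntegral (fun u => f u) (Ioi 0 \ Ioc a b) w + (∫ u in Ioc a b, dslope f w u)
    + f w * (log (b - w) - log (w - a) - Real.pi * I)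

theorem cauchyTypeIntegralContinuation_eq_of_im_neg
    (hfi : IntegrableOn (fun u : ℝ => (1 + |u|)⁻¹ • f u) (Ioi 0)) {w : ℂ} (hw : w.im < 0)
    {a b : ℝ} (ha : 0 ≤ a) (hab : a ≤ b) :
    cauchyTypeIntegralContinuation f a b w = cauchyTypeIntegral (fun u => f u) (Ioi 0) w := by
  rw [cauchyTypeIntegral_Ioi_eq hfi hw.ne ha hab, cauchyTypeIntegralContinuation,
    show (a : ℂ) - w = -(w - a) by ring, log_neg_of_im_neg (by simpa using hw)]
  ring

theorem cauchyTypeIntegralContinuation_eq_of_im_pos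
    (hfi : IntegrableOn (fun u : ℝ => (1 + |u|)⁻¹ • f u) (Ioi 0)) {w : ℂ} (hw : 0 < w.im)
    {a b : ℝ} (ha : 0 ≤ a) (hab : a ≤ b) :
    cauchyTypeIntegralContinuation f a b w =
      -(2 * Real.pi * I) * f w + cauchyTypeIntegral (fun u => f u) (Ioi 0) w := by
  rw [cauchyTypeIntegral_Ioi_eq hfi hw.ne' ha hab, cauchyTypeIntegralContinuation,
    show (a : ℂ) - w = -(w - a) by ring, log_neg_of_im_pos (by simpa using hw)]
  ring

theorem differentiableOn_cauchyTypeIntegralContinuation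
    (hf : DifferentiableOn ℂ f {w | 0 < w.re})
    (hfi : IntegrableOn (fun u : ℝ => (1 + |u|)⁻¹ • f u) (Ioi 0)) {m r : ℝ} (hrm : r < m) :
    DifferentiableOn ℂ (cauchyTypeIntegralContinuation f (m - r) (m + r)) (ball (m : ℂ) r) := by
  have hre : ∀ {R : ℝ}, ∀ w ∈ ball (m : ℂ) R, m - R < w.re ∧ w.re < m + R := fun w hw => by
    have := abs_lt.mp (abs_re_sub_lt_of_mem_ball hw)
    constructor <;> linarith
  have hpos : ball (m : ℂ) m ⊆ {w | 0 < w.re} := fun w hw =>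
    show 0 < w.re by linarith [hre w hw]
  have houter : ball (m : ℂ) r ⊆ (closure ((↑) '' (Ioi 0 \ Ioc (m - r) (m + r))))ᶜ := by
    refine subset_compl_iff_disjoint_right.mpr
      (Disjoint.closure_right (disjoint_right.mpr ?_) isOpen_ball)
    rintro _ ⟨u, ⟨-, hu⟩, rfl⟩ hball
    rw [← mem_preimage, isometry_ofReal.preimage_ball, Real.ball_eq_Ioo] at hball
    exact hu (Ioo_subset_Ioc_self hball)
  have hmiddle := differentiableOn_integral_dslope (μ := volume.restrict (Ioc (m - r) (m + r)))
    (by linarith : r < (r + m) / 2) (hf.mono ((closedBall_subset_ball (by linarith)).trans hpos))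
    (ae_restrict_of_forall_mem measurableSet_Ioc fun u hu => by
      rw [← mem_preimage, isometry_ofReal.preimage_closedBall, Real.closedBall_eq_Icc]
      exact Ioc_subset_Icc_self hu)
  have hlog : DifferentiableOn ℂ (fun w : ℂ => log ((m + r : ℝ) - w) - log (w - (m - r : ℝ)))
      (ball (m : ℂ) r) := fun w hw =>
    ((differentiableAt_const _).sub differentiableAt_id |>.clog
      (mem_slitPlane_iff.mpr (Or.inl (by simp; linarith [hre w hw])))).sub
      (differentiableAt_id.sub (differentiableAt_const _) |>.clog
      (mem_slitPlane_iff.mpr (Or.inl (by simp; linarith [hre w hw])))) |>.differentiableWithinAt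
  exact (((differentiableOn_cauchyTypeIntegral (hfi.mono_set sdiff_subset)
    (measurableSet_Ioi.diff measurableSet_Ioc)).mono houter).add
    (hmiddle.mono (ball_subset_ball (by linarith)))).add
    ((hf.mono ((ball_subset_ball hrm.le).trans hpos)).mul (hlog.sub (differentiableOn_const _)))

theorem eq_of_continuation_cauchyTypeIntegral (hf : DifferentiableOn ℂ f {w | 0 < w.re})
    (hfi : IntegrableOn (fun u : ℝ => (1 + |u|)⁻¹ • f u) (Ioi 0)) {G : ℂ → ℂ}
    (hG : DifferentiableOn ℂ G {w | 0 < w.re})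
    (hGF : ∀ w : ℂ, 0 < w.re → w.im < 0 → G w = cauchyTypeIntegral (fun u => f u) (Ioi 0) w)
    {w : ℂ} (hre : 0 < w.re) (him : 0 < w.im) :
    G w = -(2 * Real.pi * I) * f w + cauchyTypeIntegral (fun u => f u) (Ioi 0) w := by
  obtain ⟨m, r, hr, hrm, hw⟩ := exists_mem_ball_ofReal hre
  have hB : ball (m : ℂ) r ⊆ {w | 0 < w.re} := fun w hw =>
    show 0 < w.re by linarith [abs_lt.mp (abs_re_sub_lt_of_mem_ball hw)]
  set w₀ : ℂ := m - (r / 2 : ℝ) * I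
  have hw₀ : w₀ ∈ ball (m : ℂ) r := by
    rw [mem_ball_iff_norm]
    simp [w₀, abs_of_pos hr]
    linarith
  have hw₀_im : w₀.im < 0 := by simp [w₀]; linarith
  have hGH : EqOn G (cauchyTypeIntegralContinuation f (m - r) (m + r)) (ball (m : ℂ) r) := by
    refine ((hG.mono hB).analyticOnNhd isOpen_ball).eqOn_of_preconnected_of_eventuallyEq
      ((differentiableOn_cauchyTypeIntegralContinuation hf hfi hrm).analyticOnNhd isOpen_ball)
      (convex_ball _ _).isPreconnected hw₀ ?_
    filter_upwards [(isOpen_ball.inter (isOpen_lt continuous_im continuous_const)).mem_nhds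
      ⟨hw₀, hw₀_im⟩] with v ⟨hv, hv_im⟩
    rw [hGF v (hB hv) hv_im,
      cauchyTypeIntegralContinuation_eq_of_im_neg hfi hv_im (by linarith) (by linarith)]
  rw [hGH hw, cauchyTypeIntegralContinuation_eq_of_im_pos hfi him (by linarith) (by linarith)]

end Continuation

/-- Let `c ≠ 0`, `δ > 0`, and let `f` be holomorphic on `ℂ \ {0}`, bounded near `0`
on the positive real axis and `O(u^{-δ})` at infinity there.  If `G` is holomorphic
on `{z | Re (cz) > 0}` and agrees with `F₁(z) = ∫_0^∞ f(u)/(u - cz) du` for `cz` in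
the fourth quadrant (the analytic continuation of `F₁`), then for `cz` in the first
quadrant `G(z) = -2πi f(cz) + ∫_0^∞ f(u)/(u - cz) du`. -/
theorem analytic_continuation_of_cauchy_type_integral (c : ℂ) (hc : c ≠ 0) (δ : ℝ)
    (hδ : 0 < δ) (f : ℂ → ℂ) (hf : DifferentiableOn ℂ f {z : ℂ | z ≠ 0})
    (hf0 : ∃ C : ℝ, ∀ u : ℝ, 0 < u → u < 1 → ‖f u‖ ≤ C)
    (hfinf : ∃ C : ℝ, ∀ u : ℝ, 1 ≤ u → ‖f u‖ ≤ C * u ^ (-δ))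
    (G : ℂ → ℂ) (hG : DifferentiableOn ℂ G {z : ℂ | 0 < (c * z).re})
    (hGF : ∀ z : ℂ, 0 < (c * z).re → (c * z).im < 0 →
      G z = ∫ u in Ioi (0 : ℝ), f u / (u - c * z)) :
    ∀ z : ℂ, 0 < (c * z).re → 0 < (c * z).im →
      G z = -(2 * Real.pi * Complex.I) * f (c * z) +
        ∫ u in Ioi (0 : ℝ), f u / (u - c * z) := by
  intro z hre him
  have hfi : IntegrableOn (fun u : ℝ => (1 + |u|)⁻¹ • f u) (Ioi 0) :=
    integrableOn_inv_one_add_abs_smul_Ioi hδ (hf.continuousOn.comp continuous_ofReal.continuousOn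
      fun u hu => ofReal_ne_zero.mpr (ne_of_gt hu)) hf0 hfinf
  have hG' : DifferentiableOn ℂ (fun w => G (c⁻¹ * w)) {w | 0 < w.re} :=
    hG.comp (differentiableOn_id.const_mul _) fun w hw =>
      show 0 < (c * (c⁻¹ * w)).re by rwa [mul_inv_cancel_left₀ hc]
  have key := eq_of_continuation_cauchyTypeIntegral
    (hf.mono fun w (hw : 0 < w.re) => ne_of_apply_ne re hw.ne') hfi hG'
    (fun w hw_re hw_im => by
      have := hGF (c⁻¹ * w) (by rwa [mul_inv_cancel_left₀ hc]) (by rwa [mul_inv_cancel_left₀ hc])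
      rw [mul_inv_cancel_left₀ hc] at this
      exact this)
    hre him
  rw [inv_mul_cancel_left₀ hc] at key
  exact key
end

section
/- Fix δ > 0 and real numbers A < B. The quadruple series over primes p, q and positive integers m, n with q^n ≥ p^{2m} of p^{-m(1+δ)} q^{-n} (m log p)^B (log p) / (n (n log q - m log p)) converges, and is bounded by 2 (∑_{p,m} p^{-m(1+δ)} (m log p)^B log p)(∑_{q,n} q^{-n}/(n² log q)). -/
/-!
On the range `q^n ≥ p^{2m}` we have `2 m log p ≤ n log q`, hence
`n log q - m log p ≥ (n log q)/2`, and each term is at most `2 G(p, m) H(q, n)`, where `G` and `H`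
are the summands of the two factors; the bound follows by comparison with the product series.

`∑ G` converges because, with `t = m log p ≥ log 2`, `G(p, m) ≤ t^{B+1} e^{-(1+δ)t}` is
`O(e^{-(1+δ/2)t}) = O(p^{-(1+δ/2)} 2^{-m})`. `∑ H` converges because `∑_p 1/(p log p)` does:
by Chebyshev's bound `∏_{p ≤ x} p ≤ 4^x`, the dyadic block `[2^k, 2^{k+1})` contains at most
`2^{k+2}/k` primes, so it contributes `O(1/k²)`.
-/

open Finset Real

theorem Finset.sum_range_two_pow_eq_add_sum_Ico {M : Type*} [AddCommMonoid M] (f : ℕ → M)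
    (K : ℕ) :
    ∑ n ∈ range (2 ^ K), f n =
      f 0 + ∑ k ∈ range K, ∑ n ∈ Ico (2 ^ k) (2 ^ (k + 1)), f n := by
  induction K with
  | zero => simp
  | succ K ih =>
    rw [← sum_range_add_sum_Ico _ (Nat.pow_le_pow_right two_pos K.le_succ), ih, sum_range_succ,
      add_assoc]

theorem summable_of_sum_Ico_two_pow_le {f b : ℕ → ℝ} (hf : 0 ≤ f) (hb : Summable b)
    (h : ∀ k, ∑ n ∈ Ico (2 ^ k) (2 ^ (k + 1)), f n ≤ b k) : Summable f := by
  have hb0 : 0 ≤ b := fun k => (sum_nonneg fun n _ => hf n).trans (h k)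
  refine summable_of_sum_range_le hf (c := f 0 + ∑' k, b k) fun K => ?_
  calc ∑ n ∈ range K, f n ≤ ∑ n ∈ range (2 ^ K), f n :=
        sum_le_sum_of_subset_of_nonneg (range_mono K.lt_two_pow_self.le) fun n _ _ => hf n
    _ = f 0 + ∑ k ∈ range K, ∑ n ∈ Ico (2 ^ k) (2 ^ (k + 1)), f n :=
        sum_range_two_pow_eq_add_sum_Ico f K
    _ ≤ f 0 + ∑' k, b k := by
        gcongr
        exact (sum_le_sum fun k _ => h k).trans (hb.sum_le_tsum _ fun k _ => hb0 k)

theorem mul_card_primes_Ico_two_pow_le (k : ℕ) :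
    k * #{p ∈ Ico (2 ^ k) (2 ^ (k + 1)) | p.Prime} ≤ 2 ^ (k + 2) := by
  set s := {p ∈ Ico (2 ^ k) (2 ^ (k + 1)) | p.Prime}
  have hs : s ⊆ {p ∈ range (2 ^ (k + 1) + 1) | p.Prime} := by
    intro p hp
    simp only [s, mem_filter, mem_Ico, mem_range] at hp ⊢
    exact ⟨by omega, hp.2⟩
  refine (Nat.pow_le_pow_iff_right one_lt_two).mp ?_
  calc 2 ^ (k * #s) = (2 ^ k) ^ #s := pow_mul 2 k #s
    _ ≤ ∏ p ∈ s, p := pow_card_le_prod s id _ fun p hp => (mem_Ico.mp (mem_filter.mp hp).1).1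
    _ ≤ primorial (2 ^ (k + 1)) :=
        prod_le_prod_of_subset_of_one_le' hs fun p hp _ => (mem_filter.mp hp).2.one_lt.le
    _ ≤ 4 ^ 2 ^ (k + 1) := primorial_le_four_pow _
    _ = 2 ^ 2 ^ (k + 2) := by
        rw [show (4 : ℕ) = 2 ^ 2 by rfl, ← pow_mul, pow_succ 2 (k + 1), mul_comm]

theorem sum_Ico_two_pow_primes_one_div_mul_log_le (k : ℕ) :
    ∑ n ∈ Ico (2 ^ k : ℕ) (2 ^ (k + 1)), (if n.Prime then 1 / (n * log n) else 0) ≤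
      4 / log 2 / k ^ 2 := by
  rcases k.eq_zero_or_pos with rfl | hk
  · simp
  have hkR : (0 : ℝ) < k := by exact_mod_cast hk
  set s := {p ∈ Ico (2 ^ k) (2 ^ (k + 1)) | p.Prime}
  have hterm : ∀ p ∈ s, 1 / ((p : ℝ) * log p) ≤ 1 / (2 ^ k * (k * log 2)) := by
    intro p hp
    have hp : (2 : ℝ) ^ k ≤ p := by exact_mod_cast (mem_Ico.mp (mem_filter.mp hp).1).1
    have hlog : k * log 2 ≤ log p := by
      rw [← log_pow]
      exact log_le_log (by positivity) hp
    gcongr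
  have hcard : (#s : ℝ) ≤ 2 ^ (k + 2) / k := by
    rw [le_div_iff₀ hkR, mul_comm]
    exact_mod_cast mul_card_primes_Ico_two_pow_le k
  rw [← sum_filter]
  calc ∑ p ∈ s, 1 / ((p : ℝ) * log p) ≤ #s • (1 / (2 ^ k * (k * log 2))) :=
        sum_le_card_nsmul s _ _ hterm
    _ ≤ 2 ^ (k + 2) / k * (1 / (2 ^ k * (k * log 2))) := by
        rw [nsmul_eq_mul]
        gcongr
    _ = 4 / log 2 / k ^ 2 := by
        field_simp
        ring

theorem Nat.Primes.summable_one_div_mul_log :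
    Summable fun p : Nat.Primes => 1 / ((p : ℝ) * Real.log p) := by
  refine (Nat.Primes.summable_iff_summable_ite fun n : ℕ => 1 / ((n : ℝ) * Real.log n)).mpr ?_
  refine summable_of_sum_Ico_two_pow_le (fun n => ?_)
    ((Real.summable_one_div_nat_pow.mpr one_lt_two).mul_left (4 / Real.log 2))
    fun k => (sum_Ico_two_pow_primes_one_div_mul_log_le k).trans_eq (div_eq_mul_one_div _ _)
  split_ifs with hn
  · have : (0 : ℝ) < Real.log n := Real.log_pos (by exact_mod_cast hn.one_lt)
    positivity
  · exact le_rfl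

theorem exists_rpow_le_mul_exp {a : ℝ} (ha : 0 < a) (s : ℝ) {ε : ℝ} (hε : 0 < ε) :
    ∃ C, 0 ≤ C ∧ ∀ t, a ≤ t → t ^ s ≤ C * exp (ε * t) := by
  set N := ⌈s⌉₊
  refine ⟨a ^ s * N.factorial / (ε * a) ^ N, by positivity, fun t hat => ?_⟩
  have hta : 1 ≤ t / a := (one_le_div ha).mpr hat
  calc t ^ s = a ^ s * (t / a) ^ s := by
        rw [← mul_rpow ha.le (by positivity), mul_div_cancel₀ t ha.ne']
    _ ≤ a ^ s * (t / a) ^ N := by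
        rw [← rpow_natCast]
        gcongr
        exact Nat.le_ceil s
    _ = a ^ s / (ε * a) ^ N * (ε * t) ^ N := by
        rw [div_pow, mul_pow, mul_pow]
        field_simp
    _ ≤ a ^ s / (ε * a) ^ N * (N.factorial * exp (ε * t)) := by
        gcongr
        rw [← div_le_iff₀' (by positivity)]
        exact pow_div_factorial_le_exp _ (by nlinarith) N
    _ = a ^ s * N.factorial / (ε * a) ^ N * exp (ε * t) := by ring

theorem Nat.Primes.two_le_cast (p : Nat.Primes) : (2 : ℝ) ≤ p := by exact_mod_cast p.2.two_le

theorem Nat.Primes.log_pos (p : Nat.Primes) : 0 < Real.log p :=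
  Real.log_pos (by linarith [p.two_le_cast])

-- In `summandG`, `summandH` and `summandF` a pair `(p, m)` stands for the prime power
-- `p ^ (m + 1)`.
noncomputable def summandG (δ B : ℝ) (y : Nat.Primes × ℕ) : ℝ :=
  (y.1 : ℝ) ^ (-((y.2 + 1 : ℝ) * (1 + δ))) * ((y.2 + 1 : ℝ) * log (y.1 : ℝ)) ^ B *
    log (y.1 : ℝ)

noncomputable def summandH (y : Nat.Primes × ℕ) : ℝ :=
  (y.1 : ℝ) ^ (-(y.2 + 1 : ℤ)) / ((y.2 + 1 : ℝ) ^ 2 * log (y.1 : ℝ))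

theorem summandG_nonneg (δ B : ℝ) (y : Nat.Primes × ℕ) : 0 ≤ summandG δ B y := by
  have := y.1.log_pos
  unfold summandG
  positivity

theorem summandH_nonneg (y : Nat.Primes × ℕ) : 0 ≤ summandH y := by
  have := y.1.log_pos
  unfold summandH
  positivity

theorem summandG_le {δ B C : ℝ} (hδ : 0 ≤ δ) (hC0 : 0 ≤ C)
    (hC : ∀ t, log 2 ≤ t → t ^ (B + 1) ≤ C * exp (δ / 2 * t)) (y : Nat.Primes × ℕ) :
    summandG δ B y ≤ C * ((y.1 : ℝ) ^ (-(1 + δ / 2)) * (1 / 2) ^ y.2) := by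
  obtain ⟨p, m⟩ := y
  have hp : (0 : ℝ) < p := by linarith [p.two_le_cast]
  set L := Real.log p
  set t := ((m : ℝ) + 1) * L
  have hL2 : log 2 ≤ L := log_le_log two_pos p.two_le_cast
  have hLt : L ≤ t := le_mul_of_one_le_left p.log_pos.le (by simp)
  have ht : 0 < t := by have := p.log_pos; positivity
  calc summandG δ B (p, m) = exp (-((1 + δ) * t)) * (t ^ B * L) := by
        rw [summandG, rpow_def_of_pos hp,
          show L * -((m + 1) * (1 + δ)) = -((1 + δ) * t) by ring]
        ring
    _ ≤ exp (-((1 + δ) * t)) * (C * exp (δ / 2 * t)) := by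
        refine mul_le_mul_of_nonneg_left ?_ (exp_nonneg _)
        calc t ^ B * L ≤ t ^ B * t := by gcongr
          _ = t ^ (B + 1) := (rpow_add_one ht.ne' B).symm
          _ ≤ C * exp (δ / 2 * t) := hC t (hL2.trans hLt)
    _ = C * (exp (L * -(1 + δ / 2)) * exp (m * -((1 + δ / 2) * L))) := by
        rw [mul_left_comm, ← exp_add, ← exp_add]
        congr 2
        ring
    _ ≤ C * ((p : ℝ) ^ (-(1 + δ / 2)) * (1 / 2) ^ m) := by
        have half_pow : (1 / 2 : ℝ) ^ m = exp (m * -log 2) := by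
          rw [exp_nat_mul, exp_neg, exp_log two_pos, one_div]
        rw [← rpow_def_of_pos hp, half_pow]
        gcongr
        nlinarith [mul_nonneg hδ p.log_pos.le]

theorem summable_summandG {δ : ℝ} (hδ : 0 < δ) (B : ℝ) : Summable (summandG δ B) := by
  obtain ⟨C, hC0, hC⟩ := exists_rpow_le_mul_exp (log_pos one_lt_two) (B + 1) (half_pos hδ)
  have hp : Summable fun p : Nat.Primes => (p : ℝ) ^ (-(1 + δ / 2)) :=
    Nat.Primes.summable_rpow.mpr (by linarith)
  exact .of_nonneg_of_le (summandG_nonneg δ B) (summandG_le hδ.le hC0 hC)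
    ((hp.mul_of_nonneg summable_geometric_two (fun p => by positivity)
      fun m => by positivity).mul_left C)

theorem summandH_le (y : Nat.Primes × ℕ) :
    summandH y ≤ 1 / ((y.1 : ℝ) * log y.1) * (1 / 2) ^ y.2 := by
  obtain ⟨q, n⟩ := y
  have hq := q.two_le_cast
  have hlog := q.log_pos
  calc summandH (q, n) = 1 / ((q : ℝ) * q ^ n * ((n + 1) ^ 2 * log q)) := by
        rw [summandH, zpow_neg, ← one_div, div_div, ← pow_succ']
        norm_cast
    _ ≤ 1 / ((q : ℝ) * 2 ^ n * (1 * log q)) := by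
        gcongr
        nlinarith [(n.cast_nonneg : (0 : ℝ) ≤ n)]
    _ = 1 / ((q : ℝ) * log q) * (1 / 2) ^ n := by
        rw [one_div_pow]
        field_simp

theorem summable_summandH : Summable summandH :=
  .of_nonneg_of_le summandH_nonneg summandH_le
    (Nat.Primes.summable_one_div_mul_log.mul_of_nonneg summable_geometric_two
      (fun p => by have := p.log_pos; positivity) fun m => by positivity)

noncomputable def summandF (δ B : ℝ) (z : (Nat.Primes × ℕ) × (Nat.Primes × ℕ)) : ℝ :=
  (z.1.1 : ℝ) ^ (-((z.1.2 + 1 : ℝ) * (1 + δ))) * (z.2.1 : ℝ) ^ (-(z.2.2 + 1 : ℤ)) *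
    ((z.1.2 + 1 : ℝ) * log (z.1.1 : ℝ)) ^ B * log (z.1.1 : ℝ) /
    ((z.2.2 + 1 : ℝ) *
      ((z.2.2 + 1 : ℝ) * log (z.2.1 : ℝ) - (z.1.2 + 1 : ℝ) * log (z.1.1 : ℝ)))

theorem two_mul_mul_log_le_of_pow_le {x y : ℝ} {a b : ℕ} (hx : 0 < x)
    (h : x ^ (2 * a) ≤ y ^ b) : 2 * (a * log x) ≤ b * log y := by
  have := log_le_log (pow_pos hx _) h
  rw [log_pow, log_pow] at this
  push_cast at this
  linarith

theorem summandF_nonneg_and_le (δ B : ℝ) {p q : Nat.Primes} {m n : ℕ}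
    (h : (p : ℕ) ^ (2 * (m + 1)) ≤ (q : ℕ) ^ (n + 1)) :
    0 ≤ summandF δ B ((p, m), (q, n)) ∧
      summandF δ B ((p, m), (q, n)) ≤ 2 * (summandG δ B (p, m) * summandH (q, n)) := by
  have hp : (0 : ℝ) < p := by linarith [p.two_le_cast]
  have hq : (0 : ℝ) < q := by linarith [q.two_le_cast]
  have hlogq := q.log_pos
  have hgap : ((n : ℝ) + 1) * log q / 2 ≤ ((n : ℝ) + 1) * log q - (m + 1) * log p := by
    have := two_mul_mul_log_le_of_pow_le (x := p) (y := q) hp (by exact_mod_cast h)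
    push_cast at this
    linarith
  have hden :
      ((n : ℝ) + 1) ^ 2 * log q / 2 ≤ (n + 1) * ((n + 1) * log q - (m + 1) * log p) := by
    rw [pow_two, mul_assoc, mul_div_assoc]
    gcongr
  have hG := summandG_nonneg δ B (p, m)
  have hF : summandF δ B ((p, m), (q, n)) = summandG δ B (p, m) * (q : ℝ) ^ (-(n + 1 : ℤ)) /
      ((n + 1) * ((n + 1) * log q - (m + 1) * log p)) := by
    simp only [summandF, summandG]
    ring
  rw [hF]
  constructor
  · have hden_pos : (0 : ℝ) ≤ ((n : ℝ) + 1) ^ 2 * log q / 2 := by positivity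
    exact div_nonneg (mul_nonneg hG (zpow_nonneg hq.le _)) (hden_pos.trans hden)
  · calc _ ≤ summandG δ B (p, m) * (q : ℝ) ^ (-(n + 1 : ℤ)) / ((n + 1) ^ 2 * log q / 2) := by
          gcongr
      _ = 2 * (summandG δ B (p, m) * summandH (q, n)) := by
          rw [summandH]
          field_simp

theorem summable_subtype_and_tsum_le_of_le_mul {α β : Type*} {s : Set (α × β)} {f : α × β → ℝ}
    {g : α → ℝ} {h : β → ℝ} {c : ℝ} (hc : 0 ≤ c) (hg0 : 0 ≤ g) (hh0 : 0 ≤ h) (hg : Summable g)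
    (hh : Summable h) (hf : ∀ z ∈ s, 0 ≤ f z ∧ f z ≤ c * (g z.1 * h z.2)) :
    Summable (fun z : s => f z) ∧ ∑' z : s, f z ≤ c * (∑' a, g a) * ∑' b, h b := by
  have hgh : Summable fun z : α × β => g z.1 * h z.2 := hg.mul_of_nonneg hh hg0 hh0
  have hmaj : Summable fun z : s => c * (g z.1.1 * h z.1.2) := (hgh.mul_left c).subtype s
  have hfs : Summable fun z : s => f z :=
    .of_nonneg_of_le (fun z => (hf z z.2).1) (fun z => (hf z z.2).2) hmaj
  refine ⟨hfs, ?_⟩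
  calc ∑' z : s, f z ≤ ∑' z : s, c * (g z.1.1 * h z.1.2) :=
        hfs.tsum_le_tsum (fun z => (hf z z.2).2) hmaj
    _ ≤ ∑' z : α × β, c * (g z.1 * h z.2) :=
        Summable.tsum_subtype_le _ s (fun z => mul_nonneg hc (mul_nonneg (hg0 _) (hh0 _)))
          (hgh.mul_left c)
    _ = c * (∑' a, g a) * ∑' b, h b := by
        rw [tsum_mul_left, mul_assoc, hg.tsum_mul_tsum hh hgh]

theorem quadruple_series_tail_bound_general (δ B : ℝ) (hδ : 0 < δ) :
    Summable (fun x : {x : (Nat.Primes × ℕ) × (Nat.Primes × ℕ) //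
        ((x.1.1 : ℕ)) ^ (2 * (x.1.2 + 1)) ≤ ((x.2.1 : ℕ)) ^ (x.2.2 + 1)} =>
      ((x : (Nat.Primes × ℕ) × (Nat.Primes × ℕ)).1.1 : ℝ) ^
            (-(((x : (Nat.Primes × ℕ) × (Nat.Primes × ℕ)).1.2 + 1 : ℝ) * (1 + δ))) *
        ((x : (Nat.Primes × ℕ) × (Nat.Primes × ℕ)).2.1 : ℝ) ^
            (-((x : (Nat.Primes × ℕ) × (Nat.Primes × ℕ)).2.2 + 1 : ℤ)) *
        (((x : (Nat.Primes × ℕ) × (Nat.Primes × ℕ)).1.2 + 1 : ℝ) *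
            Real.log ((x : (Nat.Primes × ℕ) × (Nat.Primes × ℕ)).1.1 : ℝ)) ^ B *
        Real.log ((x : (Nat.Primes × ℕ) × (Nat.Primes × ℕ)).1.1 : ℝ) /
        (((x : (Nat.Primes × ℕ) × (Nat.Primes × ℕ)).2.2 + 1 : ℝ) *
          (((x : (Nat.Primes × ℕ) × (Nat.Primes × ℕ)).2.2 + 1 : ℝ) *
              Real.log ((x : (Nat.Primes × ℕ) × (Nat.Primes × ℕ)).2.1 : ℝ) -
            ((x : (Nat.Primes × ℕ) × (Nat.Primes × ℕ)).1.2 + 1 : ℝ) *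
              Real.log ((x : (Nat.Primes × ℕ) × (Nat.Primes × ℕ)).1.1 : ℝ)))) ∧
    (∑' x : {x : (Nat.Primes × ℕ) × (Nat.Primes × ℕ) //
        ((x.1.1 : ℕ)) ^ (2 * (x.1.2 + 1)) ≤ ((x.2.1 : ℕ)) ^ (x.2.2 + 1)},
      ((x : (Nat.Primes × ℕ) × (Nat.Primes × ℕ)).1.1 : ℝ) ^
            (-(((x : (Nat.Primes × ℕ) × (Nat.Primes × ℕ)).1.2 + 1 : ℝ) * (1 + δ))) *
        ((x : (Nat.Primes × ℕ) × (Nat.Primes × ℕ)).2.1 : ℝ) ^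
            (-((x : (Nat.Primes × ℕ) × (Nat.Primes × ℕ)).2.2 + 1 : ℤ)) *
        (((x : (Nat.Primes × ℕ) × (Nat.Primes × ℕ)).1.2 + 1 : ℝ) *
            Real.log ((x : (Nat.Primes × ℕ) × (Nat.Primes × ℕ)).1.1 : ℝ)) ^ B *
        Real.log ((x : (Nat.Primes × ℕ) × (Nat.Primes × ℕ)).1.1 : ℝ) /
        (((x : (Nat.Primes × ℕ) × (Nat.Primes × ℕ)).2.2 + 1 : ℝ) *
          (((x : (Nat.Primes × ℕ) × (Nat.Primes × ℕ)).2.2 + 1 : ℝ) *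
              Real.log ((x : (Nat.Primes × ℕ) × (Nat.Primes × ℕ)).2.1 : ℝ) -
            ((x : (Nat.Primes × ℕ) × (Nat.Primes × ℕ)).1.2 + 1 : ℝ) *
              Real.log ((x : (Nat.Primes × ℕ) × (Nat.Primes × ℕ)).1.1 : ℝ)))) ≤
      2 * (∑' y : Nat.Primes × ℕ,
          (y.1 : ℝ) ^ (-((y.2 + 1 : ℝ) * (1 + δ))) *
            ((y.2 + 1 : ℝ) * Real.log (y.1 : ℝ)) ^ B * Real.log (y.1 : ℝ)) *
        (∑' y : Nat.Primes × ℕ,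
          (y.1 : ℝ) ^ (-(y.2 + 1 : ℤ)) /
            ((y.2 + 1 : ℝ) ^ 2 * Real.log (y.1 : ℝ))) :=
  summable_subtype_and_tsum_le_of_le_mul (f := summandF δ B) zero_le_two (summandG_nonneg δ B)
    summandH_nonneg (summable_summandG hδ B) summable_summandH
    fun ⟨⟨_, _⟩, _, _⟩ hz => summandF_nonneg_and_le δ B hz

/-- Fix `δ > 0` and reals `A < B`.  The quadruple series over primes `p, q` and positive
integers `m, n` with `q^n ≥ p^{2m}` of
`p^{-m(1+δ)} q^{-n} (m log p)^B (log p) / (n (n log q - m log p))` converges, and its sum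
is at most `2 (∑_{p,m} p^{-m(1+δ)} (m log p)^B log p)(∑_{q,n} q^{-n}/(n² log q))`. -/
theorem quadruple_series_tail_bound (δ A B : ℝ) (hδ : 0 < δ) (hAB : A < B) :
    Summable (fun x : {x : (Nat.Primes × ℕ) × (Nat.Primes × ℕ) //
        ((x.1.1 : ℕ)) ^ (2 * (x.1.2 + 1)) ≤ ((x.2.1 : ℕ)) ^ (x.2.2 + 1)} =>
      ((x : (Nat.Primes × ℕ) × (Nat.Primes × ℕ)).1.1 : ℝ) ^
            (-(((x : (Nat.Primes × ℕ) × (Nat.Primes × ℕ)).1.2 + 1 : ℝ) * (1 + δ))) *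
        ((x : (Nat.Primes × ℕ) × (Nat.Primes × ℕ)).2.1 : ℝ) ^
            (-((x : (Nat.Primes × ℕ) × (Nat.Primes × ℕ)).2.2 + 1 : ℤ)) *
        (((x : (Nat.Primes × ℕ) × (Nat.Primes × ℕ)).1.2 + 1 : ℝ) *
            Real.log ((x : (Nat.Primes × ℕ) × (Nat.Primes × ℕ)).1.1 : ℝ)) ^ B *
        Real.log ((x : (Nat.Primes × ℕ) × (Nat.Primes × ℕ)).1.1 : ℝ) /
        (((x : (Nat.Primes × ℕ) × (Nat.Primes × ℕ)).2.2 + 1 : ℝ) *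
          (((x : (Nat.Primes × ℕ) × (Nat.Primes × ℕ)).2.2 + 1 : ℝ) *
              Real.log ((x : (Nat.Primes × ℕ) × (Nat.Primes × ℕ)).2.1 : ℝ) -
            ((x : (Nat.Primes × ℕ) × (Nat.Primes × ℕ)).1.2 + 1 : ℝ) *
              Real.log ((x : (Nat.Primes × ℕ) × (Nat.Primes × ℕ)).1.1 : ℝ)))) ∧
    (∑' x : {x : (Nat.Primes × ℕ) × (Nat.Primes × ℕ) //
        ((x.1.1 : ℕ)) ^ (2 * (x.1.2 + 1)) ≤ ((x.2.1 : ℕ)) ^ (x.2.2 + 1)},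
      ((x : (Nat.Primes × ℕ) × (Nat.Primes × ℕ)).1.1 : ℝ) ^
            (-(((x : (Nat.Primes × ℕ) × (Nat.Primes × ℕ)).1.2 + 1 : ℝ) * (1 + δ))) *
        ((x : (Nat.Primes × ℕ) × (Nat.Primes × ℕ)).2.1 : ℝ) ^
            (-((x : (Nat.Primes × ℕ) × (Nat.Primes × ℕ)).2.2 + 1 : ℤ)) *
        (((x : (Nat.Primes × ℕ) × (Nat.Primes × ℕ)).1.2 + 1 : ℝ) *
            Real.log ((x : (Nat.Primes × ℕ) × (Nat.Primes × ℕ)).1.1 : ℝ)) ^ B *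
        Real.log ((x : (Nat.Primes × ℕ) × (Nat.Primes × ℕ)).1.1 : ℝ) /
        (((x : (Nat.Primes × ℕ) × (Nat.Primes × ℕ)).2.2 + 1 : ℝ) *
          (((x : (Nat.Primes × ℕ) × (Nat.Primes × ℕ)).2.2 + 1 : ℝ) *
              Real.log ((x : (Nat.Primes × ℕ) × (Nat.Primes × ℕ)).2.1 : ℝ) -
            ((x : (Nat.Primes × ℕ) × (Nat.Primes × ℕ)).1.2 + 1 : ℝ) *
              Real.log ((x : (Nat.Primes × ℕ) × (Nat.Primes × ℕ)).1.1 : ℝ)))) ≤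
      2 * (∑' y : Nat.Primes × ℕ,
          (y.1 : ℝ) ^ (-((y.2 + 1 : ℝ) * (1 + δ))) *
            ((y.2 + 1 : ℝ) * Real.log (y.1 : ℝ)) ^ B * Real.log (y.1 : ℝ)) *
        (∑' y : Nat.Primes × ℕ,
          (y.1 : ℝ) ^ (-(y.2 + 1 : ℤ)) /
            ((y.2 + 1 : ℝ) ^ 2 * Real.log (y.1 : ℝ))) :=
  quadruple_series_tail_bound_general δ B hδ
end

section
/- Fix δ > 0 and B ∈ ℝ. For any prime p and positive integer m, the sum over primes q and positive integers n with q^n < p^m of q^{-n}/(n (m log p - n log q)) is O(m log p), with implied constant independent of p and m. Consequently, the quadruple series ∑_{p,m} ∑_{q^n < p^m} p^{-m(1+δ)} q^{-n} (m log p)^B (log p) / (n (m log p - n log q)) converges. -/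
/-!
Write `N = p^(m+1)` and `l = q^(n+1) < N`. Distinct pairs `(q, n)` give distinct prime powers `l`,
so the inner sum is dominated by a sum over `1 ≤ l < N`. Since `log N - log l ≥ (N - l) / N`, the
term at `l` is at most `N / (l (N - l)) = 1 / l + 1 / (N - l)`, and these sum to at most
`2 (1 + log N) ≤ 5 log N`. Consequently the `(p, m)`-slice of the quadruple series is
`O(N^{-(1+δ)} (log N)^{B+2})`, which is summable over all `N ∈ ℕ`, hence over prime powers.
-/

lemma Nat.Primes.pow_succ_injective :
    Function.Injective fun y : Nat.Primes × ℕ => (y.1 : ℕ) ^ (y.2 + 1) := by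
  rintro ⟨q, n⟩ ⟨r, k⟩ h
  obtain ⟨hqr, hnk⟩ := q.prop.pow_inj r.prop h
  exact Prod.ext (Subtype.ext hqr) hnk

instance Nat.Primes.finite_pow_succ_lt (N : ℕ) :
    Finite {y : Nat.Primes × ℕ // (y.1 : ℕ) ^ (y.2 + 1) < N} :=
  ((Set.finite_Iio N).preimage Nat.Primes.pow_succ_injective.injOn).to_subtype

lemma Nat.Primes.log_pow_succ (y : Nat.Primes × ℕ) :
    Real.log (((y.1 : ℕ) ^ (y.2 + 1) : ℕ) : ℝ) = (y.2 + 1 : ℝ) * Real.log y.1 := by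
  push_cast
  rw [Real.log_pow]
  push_cast
  ring

lemma sub_div_le_log_sub_log {x y : ℝ} (hx : 0 < x) (hy : 0 < y) :
    (y - x) / y ≤ Real.log y - Real.log x := by
  have h := Real.one_sub_inv_le_log_of_pos (div_pos hy hx)
  rwa [Real.log_div hy.ne' hx.ne', inv_div, one_sub_div hy.ne'] at h

lemma one_div_mul_log_sub_log_le {x y : ℝ} (hx : 0 < x) (hxy : x < y) :
    1 / (x * (Real.log y - Real.log x)) ≤ 1 / x + 1 / (y - x) := by
  have hy : 0 < y := hx.trans hxy
  have hyx : 0 < y - x := sub_pos.mpr hxy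
  calc 1 / (x * (Real.log y - Real.log x)) ≤ 1 / (x * ((y - x) / y)) :=
        one_div_le_one_div_of_le (by positivity)
          (mul_le_mul_of_nonneg_left (sub_div_le_log_sub_log hx hy) hx.le)
    _ = 1 / x + 1 / (y - x) := by field_simp; ring

lemma sum_Ico_one_div_add_one_div_sub_le (N : ℕ) :
    ∑ l ∈ Finset.Ico 1 N, (1 / (l : ℝ) + 1 / ((N : ℝ) - l)) ≤ 2 * (1 + Real.log N) := by
  have reflect :
      ∑ l ∈ Finset.Ico 1 N, 1 / ((N : ℝ) - l) = ∑ l ∈ Finset.Ico 1 N, 1 / (l : ℝ) := by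
    have h := Finset.sum_Ico_reflect (fun l : ℕ => 1 / (l : ℝ)) 1 (Nat.le_succ N)
    rw [Nat.add_sub_cancel_left, Nat.add_sub_cancel] at h
    rw [← h]
    refine Finset.sum_congr rfl fun l hl => ?_
    rw [Nat.cast_sub (Finset.mem_Ico.mp hl).2.le]
  have harmonic_bound : ∑ l ∈ Finset.Ico 1 N, 1 / (l : ℝ) ≤ 1 + Real.log N := by
    calc ∑ l ∈ Finset.Ico 1 N, 1 / (l : ℝ) ≤ ∑ l ∈ Finset.Icc 1 N, 1 / (l : ℝ) :=
          Finset.sum_le_sum_of_subset_of_nonneg Finset.Ico_subset_Icc_self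
            fun _ _ _ => by positivity
      _ = harmonic N := by simp [harmonic_eq_sum_Icc]
      _ ≤ 1 + Real.log N := harmonic_le_one_add_log N
  rw [Finset.sum_add_distrib, reflect]
  linarith

noncomputable def primePowerTerm (L : ℝ) (y : Nat.Primes × ℕ) : ℝ :=
  (y.1 : ℝ) ^ (-(y.2 + 1 : ℤ)) / ((y.2 + 1 : ℝ) * (L - (y.2 + 1 : ℝ) * Real.log y.1))

section primePowerTerm

variable {N : ℕ} {y : Nat.Primes × ℕ}

lemma primePowerTerm_log_eq :
    primePowerTerm (Real.log N) y =
      (((y.1 : ℕ) ^ (y.2 + 1) : ℕ) : ℝ)⁻¹ /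
        ((y.2 + 1 : ℝ) * (Real.log N - Real.log (((y.1 : ℕ) ^ (y.2 + 1) : ℕ) : ℝ))) := by
  rw [primePowerTerm, Nat.Primes.log_pow_succ, Nat.cast_pow, ← zpow_natCast, ← zpow_neg]
  push_cast
  rfl

lemma log_sub_log_primePow_pos (hy : (y.1 : ℕ) ^ (y.2 + 1) < N) :
    0 < Real.log N - Real.log (((y.1 : ℕ) ^ (y.2 + 1) : ℕ) : ℝ) :=
  sub_pos.mpr <|
    Real.log_lt_log (by exact_mod_cast pow_pos y.1.prop.pos _) (by exact_mod_cast hy)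

lemma primePowerTerm_nonneg (hy : (y.1 : ℕ) ^ (y.2 + 1) < N) :
    0 ≤ primePowerTerm (Real.log N) y := by
  rw [primePowerTerm_log_eq]
  have := log_sub_log_primePow_pos hy
  positivity

lemma primePowerTerm_le (hy : (y.1 : ℕ) ^ (y.2 + 1) < N) :
    primePowerTerm (Real.log N) y ≤
      1 / (((y.1 : ℕ) ^ (y.2 + 1) : ℕ) : ℝ) +
        1 / ((N : ℝ) - (((y.1 : ℕ) ^ (y.2 + 1) : ℕ) : ℝ)) := by
  have hgap := log_sub_log_primePow_pos hy
  rw [primePowerTerm_log_eq]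
  set l : ℕ := (y.1 : ℕ) ^ (y.2 + 1)
  have hl : (0 : ℝ) < l := by exact_mod_cast pow_pos y.1.prop.pos _
  calc (l : ℝ)⁻¹ / ((y.2 + 1 : ℝ) * (Real.log N - Real.log l))
        = 1 / (l * ((y.2 + 1 : ℝ) * (Real.log N - Real.log l))) := by
        rw [div_eq_mul_inv, ← mul_inv, one_div]
    _ ≤ 1 / (l * (Real.log N - Real.log l)) := by
        gcongr
        exact le_mul_of_one_le_left hgap.le (by simp)
    _ ≤ 1 / l + 1 / (N - l) := one_div_mul_log_sub_log_le hl (by exact_mod_cast hy)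

lemma tsum_primePowerTerm_le (hN : 2 ≤ N) :
    ∑' y : {y : Nat.Primes × ℕ // (y.1 : ℕ) ^ (y.2 + 1) < N}, primePowerTerm (Real.log N) y ≤
      5 * Real.log N := by
  let e : {y : Nat.Primes × ℕ // (y.1 : ℕ) ^ (y.2 + 1) < N} → Finset.Ico 1 N :=
    fun y => ⟨_, Finset.mem_Ico.mpr ⟨pow_pos y.1.1.prop.pos _, y.2⟩⟩
  have he : Function.Injective e := fun y z h =>
    Subtype.ext (Nat.Primes.pow_succ_injective (congrArg Subtype.val h))
  have hlog2 : Real.log 2 ≤ Real.log N := Real.log_le_log (by norm_num) (by exact_mod_cast hN)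
  calc ∑' y : {y : Nat.Primes × ℕ // (y.1 : ℕ) ^ (y.2 + 1) < N}, primePowerTerm (Real.log N) y
      ≤ ∑' l : Finset.Ico 1 N, (1 / (l : ℝ) + 1 / ((N : ℝ) - l)) := by
        refine Summable.tsum_le_tsum_of_inj e he (fun l _ => ?_)
          (fun y => primePowerTerm_le y.2) .of_finite .of_finite
        have : (l : ℝ) < N := by exact_mod_cast (Finset.mem_Ico.mp l.2).2
        have : (0 : ℝ) < N - l := by linarith
        positivity
    _ = ∑ l ∈ Finset.Ico 1 N, (1 / (l : ℝ) + 1 / ((N : ℝ) - l)) :=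
        Finset.tsum_subtype _ fun l : ℕ => 1 / (l : ℝ) + 1 / ((N : ℝ) - l)
    _ ≤ 2 * (1 + Real.log N) := sum_Ico_one_div_add_one_div_sub_le N
    _ ≤ 5 * Real.log N := by linarith [Real.log_two_gt_d9]

end primePowerTerm

lemma tsum_primePowerTerm_le_mul_log (p : Nat.Primes) (m : ℕ) :
    ∑' y : {y : Nat.Primes × ℕ // (y.1 : ℕ) ^ (y.2 + 1) < (p : ℕ) ^ (m + 1)},
      primePowerTerm ((m + 1 : ℝ) * Real.log p) y ≤ 5 * ((m + 1 : ℝ) * Real.log p) := by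
  rw [← Nat.Primes.log_pow_succ (p, m)]
  exact tsum_primePowerTerm_le (p.prop.two_le.trans (Nat.le_self_pow m.succ_ne_zero _))

lemma Real.summable_nat_rpow_mul_log_rpow {s : ℝ} (hs : s < -1) (c : ℝ) :
    Summable fun n : ℕ => (n : ℝ) ^ s * Real.log n ^ c := by
  obtain ⟨ε, hε, hsε⟩ : ∃ ε : ℝ, 0 < ε ∧ s + ε < -1 := ⟨(-1 - s) / 2, by linarith, by linarith⟩
  refine summable_of_isBigO_nat (Real.summable_nat_rpow.mpr hsε) ?_
  have hlog : (fun n : ℕ => Real.log n ^ c) =O[Filter.atTop] fun n : ℕ => (n : ℝ) ^ ε :=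
    ((isLittleO_log_rpow_rpow_atTop c hε).comp_tendsto tendsto_natCast_atTop_atTop).isBigO
  refine ((Asymptotics.isBigO_refl (fun n : ℕ => (n : ℝ) ^ s) _).mul hlog).congr_right
    fun n => ?_
  exact (Real.rpow_add' n.cast_nonneg (by linarith)).symm

-- The `(p, m, q, n)` summand of the quadruple series is
-- `outerWeight δ B (p, m) * primePowerTerm ((m + 1) * log p) (q, n)`.
noncomputable def outerWeight (δ B : ℝ) (a : Nat.Primes × ℕ) : ℝ :=
  (a.1 : ℝ) ^ (-((a.2 + 1 : ℝ) * (1 + δ))) * ((a.2 + 1 : ℝ) * Real.log a.1) ^ B * Real.log a.1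

lemma outerWeight_nonneg (δ B : ℝ) (a : Nat.Primes × ℕ) : 0 ≤ outerWeight δ B a := by
  have : 0 ≤ Real.log a.1 := Real.log_natCast_nonneg _
  unfold outerWeight
  positivity

lemma outerWeight_mul_le (δ B : ℝ) (a : Nat.Primes × ℕ) :
    outerWeight δ B a * (5 * ((a.2 + 1 : ℝ) * Real.log a.1)) ≤
      5 * ((((a.1 : ℕ) ^ (a.2 + 1) : ℕ) : ℝ) ^ (-(1 + δ)) *
        Real.log (((a.1 : ℕ) ^ (a.2 + 1) : ℕ) : ℝ) ^ (B + 2)) := by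
  have hp : (0 : ℝ) < a.1 := by exact_mod_cast a.1.prop.pos
  have hpow : (a.1 : ℝ) ^ (-((a.2 + 1 : ℝ) * (1 + δ))) =
      (((a.1 : ℕ) ^ (a.2 + 1) : ℕ) : ℝ) ^ (-(1 + δ)) := by
    rw [neg_mul_eq_mul_neg, Real.rpow_mul hp.le, Nat.cast_pow, ← Real.rpow_natCast]
    push_cast
    rfl
  rw [Nat.Primes.log_pow_succ, ← hpow, outerWeight]
  have hlogp : 0 ≤ Real.log a.1 := Real.log_natCast_nonneg _
  have hlogp_le : Real.log a.1 ≤ (a.2 + 1 : ℝ) * Real.log a.1 :=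
    le_mul_of_one_le_left hlogp (by simp)
  set L := (a.2 + 1 : ℝ) * Real.log a.1
  have hL : 0 < L := mul_pos (by positivity) (Real.log_pos (by exact_mod_cast a.1.prop.one_lt))
  calc _ = 5 * ((a.1 : ℝ) ^ (-((a.2 + 1 : ℝ) * (1 + δ))) * L ^ B * L) * Real.log a.1 := by ring
    _ ≤ 5 * ((a.1 : ℝ) ^ (-((a.2 + 1 : ℝ) * (1 + δ))) * L ^ B * L) * L := by gcongr
    _ = _ := by rw [Real.rpow_add hL, Real.rpow_two]; ring

lemma summable_sigma_outerWeight_mul_primePowerTerm {δ : ℝ} (hδ : 0 < δ) (B : ℝ) :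
    Summable fun x : Σ a : Nat.Primes × ℕ,
        {b : Nat.Primes × ℕ // (b.1 : ℕ) ^ (b.2 + 1) < (a.1 : ℕ) ^ (a.2 + 1)} =>
      outerWeight δ B x.1 * primePowerTerm ((x.1.2 + 1 : ℝ) * Real.log x.1.1) x.2 := by
  have hnonneg (x : Σ a : Nat.Primes × ℕ,
      {b : Nat.Primes × ℕ // (b.1 : ℕ) ^ (b.2 + 1) < (a.1 : ℕ) ^ (a.2 + 1)}) :
      0 ≤ outerWeight δ B x.1 * primePowerTerm ((x.1.2 + 1 : ℝ) * Real.log x.1.1) x.2 := by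
    refine mul_nonneg (outerWeight_nonneg δ B x.1) ?_
    rw [← Nat.Primes.log_pow_succ]
    exact primePowerTerm_nonneg x.2.2
  have hcmp := ((Real.summable_nat_rpow_mul_log_rpow (s := -(1 + δ)) (by linarith) (B + 2)
    ).comp_injective Nat.Primes.pow_succ_injective).mul_left 5
  refine (summable_sigma_of_nonneg hnonneg).mpr ⟨fun a => .of_finite, ?_⟩
  refine .of_nonneg_of_le (fun a => tsum_nonneg fun b => hnonneg ⟨a, b⟩) (fun a => ?_) hcmp
  calc _ = outerWeight δ B a * ∑' b : {b : Nat.Primes × ℕ //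
          (b.1 : ℕ) ^ (b.2 + 1) < (a.1 : ℕ) ^ (a.2 + 1)},
            primePowerTerm ((a.2 + 1 : ℝ) * Real.log a.1) b := tsum_mul_left
    _ ≤ outerWeight δ B a * (5 * ((a.2 + 1 : ℝ) * Real.log a.1)) := by
        gcongr
        · exact outerWeight_nonneg δ B a
        · exact tsum_primePowerTerm_le_mul_log a.1 a.2
    _ ≤ _ := outerWeight_mul_le δ B a

/-- Fix `δ > 0` and `B : ℝ`.  For every prime `p` and positive integer `m`, the sum over
primes `q` and positive integers `n` with `q^n < p^m` of `q^{-n}/(n(m log p - n log q))`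
is `O(m log p)` uniformly in `p, m`; consequently the quadruple series
`∑_{p,m} ∑_{q^n < p^m} p^{-m(1+δ)} q^{-n} (m log p)^B (log p) / (n (m log p - n log q))`
converges. -/
theorem inner_sum_bound_and_quadruple_summable (δ B : ℝ) (hδ : 0 < δ) :
    (∃ C : ℝ, ∀ (p : Nat.Primes) (m : ℕ),
      (∑' y : {y : Nat.Primes × ℕ // ((y.1 : ℕ)) ^ (y.2 + 1) < ((p : ℕ)) ^ (m + 1)},
        ((y : Nat.Primes × ℕ).1 : ℝ) ^ (-((y : Nat.Primes × ℕ).2 + 1 : ℤ)) /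
          (((y : Nat.Primes × ℕ).2 + 1 : ℝ) *
            ((m + 1 : ℝ) * Real.log (p : ℝ) -
              ((y : Nat.Primes × ℕ).2 + 1 : ℝ) * Real.log ((y : Nat.Primes × ℕ).1 : ℝ))))
        ≤ C * ((m + 1 : ℝ) * Real.log (p : ℝ))) ∧
    Summable (fun x : {x : (Nat.Primes × ℕ) × (Nat.Primes × ℕ) //
        ((x.2.1 : ℕ)) ^ (x.2.2 + 1) < ((x.1.1 : ℕ)) ^ (x.1.2 + 1)} =>
      ((x : (Nat.Primes × ℕ) × (Nat.Primes × ℕ)).1.1 : ℝ) ^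
            (-(((x : (Nat.Primes × ℕ) × (Nat.Primes × ℕ)).1.2 + 1 : ℝ) * (1 + δ))) *
        ((x : (Nat.Primes × ℕ) × (Nat.Primes × ℕ)).2.1 : ℝ) ^
            (-((x : (Nat.Primes × ℕ) × (Nat.Primes × ℕ)).2.2 + 1 : ℤ)) *
        (((x : (Nat.Primes × ℕ) × (Nat.Primes × ℕ)).1.2 + 1 : ℝ) *
            Real.log ((x : (Nat.Primes × ℕ) × (Nat.Primes × ℕ)).1.1 : ℝ)) ^ B *
        Real.log ((x : (Nat.Primes × ℕ) × (Nat.Primes × ℕ)).1.1 : ℝ) /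
        (((x : (Nat.Primes × ℕ) × (Nat.Primes × ℕ)).2.2 + 1 : ℝ) *
          (((x : (Nat.Primes × ℕ) × (Nat.Primes × ℕ)).1.2 + 1 : ℝ) *
              Real.log ((x : (Nat.Primes × ℕ) × (Nat.Primes × ℕ)).1.1 : ℝ) -
            ((x : (Nat.Primes × ℕ) × (Nat.Primes × ℕ)).2.2 + 1 : ℝ) *
              Real.log ((x : (Nat.Primes × ℕ) × (Nat.Primes × ℕ)).2.1 : ℝ)))) := by
  refine ⟨⟨5, tsum_primePowerTerm_le_mul_log⟩, ?_⟩
  refine ((Equiv.subtypeProdEquivSigmaSubtype _).summable_iff.mpr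
    (summable_sigma_outerWeight_mul_primePowerTerm hδ B)).congr fun x => ?_
  simp only [Function.comp_apply, Equiv.subtypeProdEquivSigmaSubtype, Equiv.coe_fn_mk, outerWeight,
    primePowerTerm]
  ring
end

section
/- Let χ be a primitive Dirichlet character modulo N ≥ 2 with Gauss sum G(χ). For Re(s) < 0, the functional equation L(s, χ) = (N^{-s}/(2π)^{1-s}) G(χ) Γ(1-s) (e^{-πi(1-s)/2} + χ(-1) e^{πi(1-s)/2}) L(1-s, χ̄) holds, where χ̄ is the complex conjugate character. -/
open Complex ZMod

private lemma ZMod_LFunction_const_mul' {N : ℕ} [NeZero N] (a : ℂ) (Φ : ZMod N → ℂ) (s : ℂ) :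
    ZMod.LFunction (fun j ↦ a * Φ j) s = a * ZMod.LFunction Φ s := by
  simp only [ZMod.LFunction, mul_assoc, ← Finset.mul_sum]
  ring

/-- Functional equation of Dirichlet `L`-functions: for a primitive Dirichlet character
`χ` mod `N ≥ 2` with Gauss sum `G(χ)` and `Re s < 0`,
`L(s,χ) = (N^{-s}/(2π)^{1-s}) G(χ) Γ(1-s) (e^{-πi(1-s)/2} + χ(-1) e^{πi(1-s)/2}) L(1-s,χ̄)`. -/
theorem dirichlet_functional_equation {N : ℕ} [NeZero N] (hN : 2 ≤ N)
    (χ : DirichletCharacter ℂ N) (hχ : χ.IsPrimitive) (s : ℂ) (hs : s.re < 0) :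
    DirichletCharacter.LFunction χ s =
      ((N : ℂ) ^ (-s) / (2 * (Real.pi : ℂ)) ^ (1 - s)) *
        gaussSum χ ZMod.stdAddChar * Complex.Gamma (1 - s) *
        (Complex.exp (-Real.pi * Complex.I * (1 - s) / 2) +
          χ (-1) * Complex.exp (Real.pi * Complex.I * (1 - s) / 2)) *
        DirichletCharacter.LFunction (χ.ringHomComp (starRingEnd ℂ)) (1 - s) := by
  have hN1 : N ≠ 1 := by omega
  have hs0 : ∀ n : ℕ, (1 - s) ≠ -(n : ℂ) := by
    intro n h
    have := congrArg re h
    simp only [sub_re, one_re, neg_re, natCast_re] at this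
    have h2 : (0:ℝ) ≤ n := n.cast_nonneg
    linarith
  have key := ZMod.LFunction_one_sub (Φ := (χ : ZMod N → ℂ)) hs0
    (Or.inl (χ.map_zero' hN1))
  rw [show (1 : ℂ) - (1 - s) = s by ring] at key
  -- χ(-1) facts
  have hsq : χ (-1) * χ (-1) = 1 := by
    rw [← map_mul, neg_mul_neg, one_mul, map_one]
  have hne : χ (-1 : ZMod N) ≠ 0 := fun h => by simp [h] at hsq
  have h1 : χ (-1) * χ⁻¹ (-1) = 1 := by
    rw [← MulChar.mul_apply, mul_inv_cancel, MulChar.one_apply isUnit_one.neg]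
  have hinv : χ⁻¹ (-1 : ZMod N) = χ (-1) :=
    mul_left_cancel₀ hne (h1.trans hsq.symm)
  -- identify the Fourier transforms
  have hF : ZMod.dft (χ : ZMod N → ℂ) =
      fun k ↦ χ (-1) * gaussSum χ ZMod.stdAddChar * ((χ⁻¹ : DirichletCharacter ℂ N) : ZMod N → ℂ) k := by
    funext k
    rw [hχ.fourierTransform_eq_inv_mul_gaussSum, show (-k : ZMod N) = (-1) * k by ring,
      map_mul, hinv]
    ring
  have hF2 : ZMod.dft (fun x : ZMod N ↦ χ (-x)) =
      fun k ↦ gaussSum χ ZMod.stdAddChar * ((χ⁻¹ : DirichletCharacter ℂ N) : ZMod N → ℂ) k := by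
    rw [ZMod.dft_comp_neg]
    funext k
    rw [hχ.fourierTransform_eq_inv_mul_gaussSum, neg_neg]
    ring
  rw [hF, hF2] at key
  rw [show (fun k ↦ χ (-1) * gaussSum χ ZMod.stdAddChar * ((χ⁻¹ : DirichletCharacter ℂ N) : ZMod N → ℂ) k)
      = fun k ↦ (χ (-1) * gaussSum χ ZMod.stdAddChar) * ((χ⁻¹ : DirichletCharacter ℂ N) : ZMod N → ℂ) k
      from funext fun k => by ring] at key
  rw [ZMod_LFunction_const_mul' (χ (-1) * gaussSum χ ZMod.stdAddChar)] at key
  rw [ZMod_LFunction_const_mul' (gaussSum χ ZMod.stdAddChar)] at key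
  -- conjugate character is inverse
  have hstar : χ.ringHomComp (starRingEnd ℂ) = χ⁻¹ := MulChar.star_eq_inv χ
  have hL : DirichletCharacter.LFunction χ s = ZMod.LFunction (χ : ZMod N → ℂ) s := rfl
  have hL' : DirichletCharacter.LFunction (χ.ringHomComp (starRingEnd ℂ)) (1 - s)
      = ZMod.LFunction ((χ⁻¹ : DirichletCharacter ℂ N) : ZMod N → ℂ) (1 - s) := by
    rw [hstar]; rfl
  rw [hL, key, hL']
  rw [show ((1 : ℂ) - s) - 1 = -s by ring, show (-(1 - s) : ℂ) = -(1 - s) from rfl,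
    cpow_neg (2 * (Real.pi : ℂ)) (1 - s)]
  ring
end
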